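/- arXiv:1506.06385 — 3 statements merged into one kernel-verified Lean document; each statement's English description precedes it below -/
import Mathlib

section
/- Let θ ∈ (0, π), let 0 ≤ σ ≤ 1, let c₀ ≥ 1, and let ω₁, ω₂, … be real numbers with |ω_i| ≤ c₀ for all i. Then for every k ≥ 0, |X_{k+1} − X_k| / Y_k ≤ (√5 / 2) · σ c₀² / sin² θ. -/
open Matrix

/-- The Möbius action of a real 2×2 matrix `M = [[a,b],[c,d]]` (with positive determinant)
on the upper half plane: `M ∘ w = (a w + b)/(c w + d)`. -/
noncomputable def mobiusAct (M : Matrix (Fin 2) (Fin 2) ℝ) (w : ℂ) : ℂ :=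
  ((M 0 0 : ℂ) * w + (M 0 1 : ℂ)) / ((M 1 0 : ℂ) * w + (M 1 1 : ℂ))

/-- The transfer matrix `T_i = [[λ₀ − σ ω_i, −1],[1, 0]]` at energy `λ₀`. -/
def transferMat (lam₀ σ : ℝ) (ω : ℕ → ℝ) (i : ℕ) : Matrix (Fin 2) (Fin 2) ℝ :=
  !![lam₀ - σ * ω i, -1; 1, 0]

/-- `W_k = T_k T_{k−1} ⋯ T_1`, with `W_0 = I`. -/
def transferProd (lam₀ σ : ℝ) (ω : ℕ → ℝ) : ℕ → Matrix (Fin 2) (Fin 2) ℝ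
  | 0 => 1
  | k + 1 => transferMat lam₀ σ ω (k + 1) * transferProd lam₀ σ ω k

/-- `X_k = Re (W_k⁻¹ ∘ z)` where `z = e^{iθ}` and `λ₀ = 2 cos θ`. -/
noncomputable def Xseq (θ σ : ℝ) (ω : ℕ → ℝ) (k : ℕ) : ℝ :=
  (mobiusAct (transferProd (2 * Real.cos θ) σ ω k)⁻¹ (Complex.exp (θ * Complex.I))).re

/-- `Y_k = Im (W_k⁻¹ ∘ z)` where `z = e^{iθ}` and `λ₀ = 2 cos θ`. -/
noncomputable def Yseq (θ σ : ℝ) (ω : ℕ → ℝ) (k : ℕ) : ℝ :=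
  (mobiusAct (transferProd (2 * Real.cos θ) σ ω k)⁻¹ (Complex.exp (θ * Complex.I))).im

/-!
The points `X_k + i Y_k = W_k⁻¹ • z` form an orbit in the hyperbolic plane `ℍ`, and consecutive
points are `W_k⁻¹ • z` and `W_k⁻¹ • (T_{k+1}⁻¹ • z)`. Since `SL(2, ℝ)` acts by isometries, their
hyperbolic distance `d` is that between `z` and `T_{k+1}⁻¹ • z = 1 / (z̄ - σ ω_{k+1})`, which has
`sinh (d / 2) = |σ ω_{k+1}| / (2 sin θ)`. Two points of `ℍ` at distance `d` have real parts at most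
`Im · sinh d` apart, and `sinh d = 2 sinh (d / 2) cosh (d / 2)` gives the constant.
-/

open MatrixGroups UpperHalfPlane Real ComplexConjugate

namespace UpperHalfPlane

theorem abs_re_sub_re_le_im_mul_sinh_dist (z w : ℍ) :
    |w.re - z.re| ≤ z.im * sinh (dist z w) := by
  have hz := z.im_pos
  have hw := w.im_pos
  have hsinh : z.im * sinh (dist z w) =
      dist (z : ℂ) w * dist (z : ℂ) (conj (w : ℂ)) / (2 * w.im) := by
    rw [← mul_div_cancel₀ (dist z w) two_ne_zero, sinh_two_mul, sinh_half_dist,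
      cosh_half_dist]
    field_simp
    rw [sq_sqrt (by positivity)]
    ring
  rw [hsinh, le_div_iff₀ (by positivity), ← sq_le_sq₀ (by positivity) (by positivity)]
  simp only [mul_pow, sq_abs, Complex.dist_eq, Complex.sq_norm, Complex.normSq_apply,
    Complex.sub_re, Complex.sub_im, Complex.conj_re, Complex.conj_im, coe_re, coe_im]
  -- `|z - w|² |z - w̄|² - (2 Im w (Re w - Re z))² = ((Re w - Re z)² + Im z² - Im w²)²`
  nlinarith [sq_nonneg ((w.re - z.re) ^ 2 + z.im ^ 2 - w.im ^ 2)]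

end UpperHalfPlane

theorem Real.sinh_le_of_sinh_half_le {d a : ℝ} (h0 : 0 ≤ sinh (d / 2)) (h : sinh (d / 2) ≤ a) :
    sinh d ≤ 2 * a * √(1 + a ^ 2) := by
  have hcosh : cosh (d / 2) = √(1 + sinh (d / 2) ^ 2) := by
    rw [add_comm, ← cosh_sq, sqrt_sq (cosh_pos _).le]
  have ha : 0 ≤ a := h0.trans h
  rw [← mul_div_cancel₀ d two_ne_zero, sinh_two_mul, hcosh]
  gcongr

theorem Matrix.SpecialLinearGroup.inv_coe {n R : Type*} [DecidableEq n] [Fintype n] [CommRing R]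
    (g : SpecialLinearGroup n R) : (g : Matrix n n R)⁻¹ = ↑g⁻¹ := by
  rw [Matrix.SpecialLinearGroup.coe_inv, inv_def, g.det_coe, Ring.inverse_one, one_smul]

theorem mobiusAct_eq_coe_smul (g : SL(2, ℝ)) (z : ℍ) :
    mobiusAct (g : Matrix (Fin 2) (Fin 2) ℝ) z = ↑(g • z) := by
  rw [mobiusAct, coe_specialLinearGroup_apply]
  rfl

def transferSL (lam₀ σ : ℝ) (ω : ℕ → ℝ) (i : ℕ) : SL(2, ℝ) :=
  ⟨transferMat lam₀ σ ω i, by simp [transferMat, det_fin_two_of]⟩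

def transferProdSL (lam₀ σ : ℝ) (ω : ℕ → ℝ) : ℕ → SL(2, ℝ)
  | 0 => 1
  | k + 1 => transferSL lam₀ σ ω (k + 1) * transferProdSL lam₀ σ ω k

theorem coe_transferProdSL (lam₀ σ : ℝ) (ω : ℕ → ℝ) (k : ℕ) :
    (transferProdSL lam₀ σ ω k : Matrix (Fin 2) (Fin 2) ℝ) = transferProd lam₀ σ ω k := by
  induction k with
  | zero => rfl
  | succ k ih => rw [transferProd, ← ih]; rfl

theorem coe_transferSL_inv_smul (lam₀ σ : ℝ) (ω : ℕ → ℝ) (i : ℕ) (z : ℍ) :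
    (↑((transferSL lam₀ σ ω i)⁻¹ • z) : ℂ) = 1 / (lam₀ - σ * ω i - z) := by
  rw [← mobiusAct_eq_coe_smul, Matrix.SpecialLinearGroup.coe_inv]
  simp [mobiusAct, transferSL, transferMat, adjugate_fin_two_of]
  ring

theorem sinh_half_dist_transferSL_inv_smul (σ : ℝ) (ω : ℕ → ℝ) (i : ℕ) (z : ℍ)
    (hz : ‖(z : ℂ)‖ = 1) :
    sinh (dist z ((transferSL (2 * z.re) σ ω i)⁻¹ • z) / 2) = |σ * ω i| / (2 * z.im) := by
  set s := σ * ω i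
  set w := (transferSL (2 * z.re) σ ω i)⁻¹ • z
  set u : ℂ := conj (z : ℂ) - s
  have hu_im : u.im = -z.im := by simp [u]
  have hu0 : u ≠ 0 := fun h ↦ by simp [h] at hu_im; linarith [z.im_pos]
  have hu : 0 < ‖u‖ := norm_pos_iff.mpr hu0
  have hw : (w : ℂ) = u⁻¹ := by
    rw [coe_transferSL_inv_smul, one_div]
    congr 1
    have := Complex.add_conj (z : ℂ)
    simp only [u, s, coe_re] at this ⊢
    push_cast at this ⊢
    linear_combination -this
  have hw_im : w.im = z.im / ‖u‖ ^ 2 := by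
    rw [← coe_im, hw, Complex.inv_im, hu_im, Complex.sq_norm]
    ring
  have hdist : dist (z : ℂ) w = |s| / ‖u‖ := by
    have hzz : (z : ℂ) * conj (z : ℂ) = 1 := by
      rw [Complex.mul_conj, Complex.normSq_eq_norm_sq, hz]; norm_num
    have hzu : (z : ℂ) - u⁻¹ = -s * z / u := by
      field_simp
      linear_combination hzz
    rw [Complex.dist_eq, hw, hzu, norm_div, norm_mul, norm_neg, hz, Complex.norm_real,
      Real.norm_eq_abs, mul_one]
  rw [sinh_half_dist, hdist, hw_im, ← mul_div_assoc, ← sq, sqrt_div (sq_nonneg _),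
    sqrt_sq z.im_pos.le, sqrt_sq hu.le]
  field_simp

theorem mobiusAct_transferProd_inv (lam₀ σ : ℝ) (ω : ℕ → ℝ) (k : ℕ) (z : ℍ) :
    mobiusAct (transferProd lam₀ σ ω k)⁻¹ z = ↑((transferProdSL lam₀ σ ω k)⁻¹ • z) := by
  rw [← coe_transferProdSL, SpecialLinearGroup.inv_coe, mobiusAct_eq_coe_smul]

theorem abs_re_sub_re_transferProdSL_inv_smul_le (lam₀ σ : ℝ) (ω : ℕ → ℝ) (k : ℕ) (z : ℍ) :
    |((transferProdSL lam₀ σ ω (k + 1))⁻¹ • z).re - ((transferProdSL lam₀ σ ω k)⁻¹ • z).re|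
      ≤ ((transferProdSL lam₀ σ ω k)⁻¹ • z).im
        * sinh (dist z ((transferSL lam₀ σ ω (k + 1))⁻¹ • z)) := by
  rw [transferProdSL, _root_.mul_inv_rev, mul_smul, ← dist_smul (transferProdSL lam₀ σ ω k)⁻¹]
  exact abs_re_sub_re_le_im_mul_sinh_dist _ _

theorem two_mul_mul_sqrt_one_add_sq_le {σ c₀ P : ℝ} (hP0 : 0 < P) (hP1 : P ≤ 1) (hσ0 : 0 ≤ σ)
    (hσ1 : σ ≤ 1) (hc₀ : 1 ≤ c₀) :
    2 * (σ * c₀ / (2 * P)) * √(1 + (σ * c₀ / (2 * P)) ^ 2) ≤ √5 / 2 * (σ * c₀ ^ 2) / P ^ 2 := by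
  have hsqrt : √(1 + (σ * c₀ / (2 * P)) ^ 2) ≤ √5 / 2 * c₀ / P := by
    refine sqrt_le_iff.mpr ⟨by positivity, ?_⟩
    have h5 : √5 ^ 2 = 5 := sq_sqrt (by norm_num)
    field_simp
    rw [h5]
    have hP2 : P ^ 2 ≤ 1 := pow_le_one₀ hP0.le hP1
    have hσc : σ ^ 2 * c₀ ^ 2 ≤ c₀ ^ 2 :=
      mul_le_of_le_one_left (sq_nonneg _) (pow_le_one₀ hσ0 hσ1)
    linarith [one_le_pow₀ (n := 2) hc₀]
  calc 2 * (σ * c₀ / (2 * P)) * √(1 + (σ * c₀ / (2 * P)) ^ 2)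
      ≤ 2 * (σ * c₀ / (2 * P)) * (√5 / 2 * c₀ / P) := by gcongr
    _ = √5 / 2 * (σ * c₀ ^ 2) / P ^ 2 := by field_simp

/-- Bound on the jumps of the real part: for `θ ∈ (0,π)`, `0 ≤ σ ≤ 1`, `c₀ ≥ 1` and
`|ω_i| ≤ c₀` for all `i ≥ 1`, one has `|X_{k+1} − X_k| / Y_k ≤ (√5/2) σ c₀² / sin² θ`
for all `k ≥ 0`. -/
theorem real_part_jump_bound
    (θ σ c₀ : ℝ) (ω : ℕ → ℝ)
    (hθ : θ ∈ Set.Ioo 0 Real.pi)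
    (hσ0 : 0 ≤ σ) (hσ1 : σ ≤ 1) (hc₀ : 1 ≤ c₀)
    (hω : ∀ i, 1 ≤ i → |ω i| ≤ c₀) :
    ∀ k : ℕ, |Xseq θ σ ω (k + 1) - Xseq θ σ ω k| / Yseq θ σ ω k
      ≤ Real.sqrt 5 / 2 * (σ * c₀ ^ 2) / Real.sin θ ^ 2 := by
  intro k
  have hsin : 0 < sin θ := sin_pos_of_pos_of_lt_pi hθ.1 hθ.2
  let z : ℍ := ⟨Complex.exp (θ * Complex.I), by simpa using hsin⟩
  have hz_re : 2 * cos θ = 2 * z.re := by simp [z, UpperHalfPlane.re]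
  have hz_im : z.im = sin θ := by simp [z, UpperHalfPlane.im]
  have hz_norm : ‖(z : ℂ)‖ = 1 := Complex.norm_exp_ofReal_mul_I θ
  set g := transferProdSL (2 * cos θ) σ ω
  have hX (n : ℕ) : Xseq θ σ ω n = ((g n)⁻¹ • z).re := by
    rw [Xseq, show Complex.exp (θ * Complex.I) = z from rfl, mobiusAct_transferProd_inv]; rfl
  have hY : Yseq θ σ ω k = ((g k)⁻¹ • z).im := by
    rw [Yseq, show Complex.exp (θ * Complex.I) = z from rfl, mobiusAct_transferProd_inv]; rfl
  have hstep := sinh_half_dist_transferSL_inv_smul σ ω (k + 1) z hz_norm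
  rw [← hz_re, hz_im] at hstep
  have hs : |σ * ω (k + 1)| / (2 * sin θ) ≤ σ * c₀ / (2 * sin θ) := by
    rw [abs_mul, abs_of_nonneg hσ0]
    gcongr
    exact hω _ (Nat.le_add_left 1 k)
  have hsinh : sinh (dist z ((transferSL (2 * cos θ) σ ω (k + 1))⁻¹ • z))
      ≤ √5 / 2 * (σ * c₀ ^ 2) / sin θ ^ 2 := by
    refine (sinh_le_of_sinh_half_le ?_ (hstep ▸ hs)).trans
      (two_mul_mul_sqrt_one_add_sq_le hsin (sin_le_one θ) hσ0 hσ1 hc₀)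
    rw [hstep]
    positivity
  rw [hX, hX, hY, div_le_iff₀ ((g k)⁻¹ • z).im_pos, mul_comm]
  exact (abs_re_sub_re_transferProdSL_inv_smul_le _ σ ω k z).trans
    (mul_le_mul_of_nonneg_left hsinh ((g k)⁻¹ • z).im_pos.le)
end

section
/- Let θ ∈ (0, π), λ > 0 and T > 0. Let s, s̃ : [0, T] → ℝ be differentiable with s(0) = s̃(0), with s'(t) = λ·s(t)² for all t ∈ [0, T], and with s̃'(t) = (λ/sin²θ)·(s̃(t)² − 2·s̃(t)·cos θ + 1) for all t ∈ [0, T]. Then s(t) ≤ s̃(t) for all t ∈ [0, T]. -/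
/-- Comparison of the Riccati flows: if `s` solves `s' = λ s²` and `s̃` solves
`s̃' = (λ/sin²θ)(s̃² − 2 s̃ cos θ + 1)` on `[0, T]` with the same initial value,
then `s ≤ s̃` on `[0, T]`. -/
theorem riccati_comparison
    (θ lam T : ℝ) (hθ : θ ∈ Set.Ioo 0 Real.pi) (hlam : 0 < lam) (hT : 0 < T)
    (s stilde : ℝ → ℝ)
    (h0 : s 0 = stilde 0)
    (hs : ∀ t ∈ Set.Icc (0:ℝ) T, HasDerivAt s (lam * s t ^ 2) t)
    (hstilde : ∀ t ∈ Set.Icc (0:ℝ) T,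
      HasDerivAt stilde
        (lam / Real.sin θ ^ 2 * (stilde t ^ 2 - 2 * stilde t * Real.cos θ + 1)) t) :
    ∀ t ∈ Set.Icc (0:ℝ) T, s t ≤ stilde t := by
  have hsin : 0 < Real.sin θ := Real.sin_pos_of_pos_of_lt_pi hθ.1 hθ.2
  set g : ℝ → ℝ := fun t => s t - stilde t with hgdef
  set g' : ℝ → ℝ := fun t =>
    lam * s t ^ 2 - lam / Real.sin θ ^ 2 * (stilde t ^ 2 - 2 * stilde t * Real.cos θ + 1)
    with hg'def
  have hgd : ∀ t ∈ Set.Icc (0:ℝ) T, HasDerivAt g (g' t) t :=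
    fun t ht => (hs t ht).sub (hstilde t ht)
  have hgc : ContinuousOn g (Set.Icc 0 T) :=
    fun t ht => (hgd t ht).continuousAt.continuousWithinAt
  -- key supersolution inequality
  have key : ∀ t, g' t ≤ lam * (s t + stilde t) * g t := by
    intro t
    have h1 : lam * stilde t ^ 2 ≤
        lam / Real.sin θ ^ 2 * (stilde t ^ 2 - 2 * stilde t * Real.cos θ + 1) := by
      rw [div_mul_eq_mul_div, le_div_iff₀ (by positivity)]
      have hsq : 0 ≤ (stilde t * Real.cos θ - 1) ^ 2 := sq_nonneg _
      have hpyth : Real.sin θ ^ 2 = 1 - Real.cos θ ^ 2 := by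
        have := Real.sin_sq_add_cos_sq θ; linarith
      rw [hpyth]
      nlinarith [mul_nonneg hlam.le hsq]
    have : g' t ≤ lam * s t ^ 2 - lam * stilde t ^ 2 := by
      simp only [hg'def]; linarith
    calc g' t ≤ lam * s t ^ 2 - lam * stilde t ^ 2 := this
      _ = lam * (s t + stilde t) * g t := by simp only [hgdef]; ring
  -- bound on the coefficient
  obtain ⟨M, hM⟩ : ∃ M, ∀ t ∈ Set.Icc (0:ℝ) T, lam * (s t + stilde t) ≤ M := by
    have hc : ContinuousOn (fun t => lam * (s t + stilde t)) (Set.Icc 0 T) := by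
      apply ContinuousOn.mul continuousOn_const
      exact ContinuousOn.add (fun t ht => (hs t ht).continuousAt.continuousWithinAt)
        (fun t ht => (hstilde t ht).continuousAt.continuousWithinAt)
    obtain ⟨M, hM⟩ := (isCompact_Icc.image_of_continuousOn hc).bddAbove
    exact ⟨M, fun t ht => hM (Set.mem_image_of_mem _ ht)⟩
  by_contra hcon
  push_neg at hcon
  obtain ⟨t₀, ht₀, hgt₀⟩ := hcon
  have hgt₀' : 0 < g t₀ := by simp only [hgdef]; linarith
  -- first crossing time
  set A : Set ℝ := {t | t ∈ Set.Icc 0 t₀ ∧ g t ≤ 0} with hA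
  have h0A : (0:ℝ) ∈ A := ⟨⟨le_refl 0, ht₀.1⟩, by simp [hgdef, h0]⟩
  have hAne : A.Nonempty := ⟨0, h0A⟩
  have hAbdd : BddAbove A := ⟨t₀, fun t ht => ht.1.2⟩
  set t₁ : ℝ := sSup A with ht₁def
  have ht₁mem : t₁ ∈ Set.Icc 0 t₀ :=
    ⟨le_csSup hAbdd h0A, csSup_le hAne fun t ht => ht.1.2⟩
  have ht₁T : t₁ ∈ Set.Icc (0:ℝ) T := ⟨ht₁mem.1, ht₁mem.2.trans ht₀.2⟩
  have hsubIcc : Set.Icc t₁ t₀ ⊆ Set.Icc (0:ℝ) T :=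
    fun t ht => ⟨ht₁mem.1.trans ht.1, ht.2.trans ht₀.2⟩
  -- g > 0 strictly after t₁
  have hpos : ∀ t ∈ Set.Ioc t₁ t₀, 0 < g t := by
    intro t ht
    by_contra h
    push_neg at h
    have : t ∈ A := ⟨⟨ht₁mem.1.trans ht.1.le, ht.2⟩, h⟩
    exact absurd (le_csSup hAbdd this) (not_le.mpr ht.1)
  have ht₁lt : t₁ < t₀ := by
    rcases lt_or_eq_of_le ht₁mem.2 with h | h
    · exact h
    · exfalso
      have hcl : IsClosed A := by
        have : A = Set.Icc 0 t₀ ∩ g ⁻¹' Set.Iic 0 := by ext t; simp [hA, Set.mem_Icc]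
        rw [this]
        apply ContinuousOn.preimage_isClosed_of_isClosed
          (hgc.mono (fun t ht => ⟨ht.1, ht.2.trans ht₀.2⟩)) isClosed_Icc isClosed_Iic
      have : t₁ ∈ A := hcl.csSup_mem hAne hAbdd
      rw [h] at this
      exact absurd this.2 (not_le.mpr hgt₀')
  -- g t₁ ≤ 0 (by continuity from the closed set A, in fact t₁ ∈ A)
  have ht₁le : g t₁ ≤ 0 := by
    have hcl : IsClosed A := by
      have : A = Set.Icc 0 t₀ ∩ g ⁻¹' Set.Iic 0 := by ext t; simp [hA, Set.mem_Icc]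
      rw [this]
      apply ContinuousOn.preimage_isClosed_of_isClosed
        (hgc.mono (fun t ht => ⟨ht.1, ht.2.trans ht₀.2⟩)) isClosed_Icc isClosed_Iic
    exact (hcl.csSup_mem hAne hAbdd).2
  -- g ≥ 0 on [t₁, t₀]
  have hnonneg : ∀ t ∈ Set.Icc t₁ t₀, 0 ≤ g t := by
    intro t ht
    rcases eq_or_lt_of_le ht.1 with h | h
    · rw [← h]
      -- g t₁ ≥ 0 by right continuity
      haveI hne : (nhdsWithin t₁ (Set.Ioc t₁ t₀)).NeBot := by
        rw [← mem_closure_iff_nhdsWithin_neBot, closure_Ioc ht₁lt.ne]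
        exact Set.left_mem_Icc.mpr ht₁lt.le
      have htend : Filter.Tendsto g (nhdsWithin t₁ (Set.Ioc t₁ t₀)) (nhds (g t₁)) :=
        (hgc.continuousWithinAt ht₁T).mono
          (fun z hz => hsubIcc (Set.Ioc_subset_Icc_self hz))
      refine ge_of_tendsto htend ?_
      filter_upwards [self_mem_nhdsWithin] with z hz using (hpos z hz).le
    · exact (hpos t ⟨h, ht.2⟩).le
  -- Grönwall on [t₁, t₀]
  have hG := le_gronwallBound_of_liminf_deriv_right_le
    (f := g) (f' := g') (δ := 0) (K := M) (ε := 0) (a := t₁) (b := t₀)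
    (hgc.mono hsubIcc)
    (fun x hx r hr =>
      ((hgd x (hsubIcc (Set.Ico_subset_Icc_self hx))).hasDerivWithinAt.liminf_right_slope_le hr))
    ht₁le
    (fun x hx => by
      have hx' := hsubIcc (Set.Ico_subset_Icc_self hx)
      have h1 : g' x ≤ lam * (s x + stilde x) * g x := key x
      have h2 : lam * (s x + stilde x) * g x ≤ M * g x :=
        mul_le_mul_of_nonneg_right (hM x hx') (hnonneg x (Set.Ico_subset_Icc_self hx))
      linarith)
    t₀ (Set.right_mem_Icc.mpr ht₁lt.le)
  rw [gronwallBound_ε0, zero_mul] at hG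
  linarith
end

section
/- Let θ ∈ (0, π), λ₀ = 2cos θ, z = e^{iθ}, and let σ, ω be real numbers. Let T = [[λ₀ − σω, −1], [1, 0]] act on the upper half plane by the Möbius action. Then d₂(T ∘ z, z) = σ²ω² / sin² θ. -/
/-- For `w = x + iy`, `w' = x' + iy'` in the upper half plane,
`d₂(w, w') = ((x − x')² + (y − y')²)/(y y')`. -/
noncomputable def d₂ (w w' : ℂ) : ℝ :=
  ((w.re - w'.re) ^ 2 + (w.im - w'.im) ^ 2) / (w.im * w'.im)

/-- With `λ₀ = 2 cos θ`, `z = e^{iθ}` and `T = [[λ₀ − σω, −1],[1,0]]`, one has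
`d₂(T ∘ z, z) = σ²ω²/sin²θ`. -/
theorem d₂_transfer_matrix (θ σ ω : ℝ) (hθ : θ ∈ Set.Ioo 0 Real.pi) :
    d₂ (mobiusAct !![2 * Real.cos θ - σ * ω, -1; 1, 0] (Complex.exp (θ * Complex.I)))
        (Complex.exp (θ * Complex.I))
      = σ ^ 2 * ω ^ 2 / Real.sin θ ^ 2 := by
  obtain ⟨h0, hπ⟩ := hθ
  have hs : Real.sin θ > 0 := Real.sin_pos_of_pos_of_lt_pi h0 hπ
  have hsc : Real.sin θ ^ 2 + Real.cos θ ^ 2 = 1 := Real.sin_sq_add_cos_sq θ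
  have hz : Complex.exp (θ * Complex.I)
      = (Real.cos θ : ℂ) + (Real.sin θ : ℂ) * Complex.I := by
    rw [Complex.exp_mul_I, ← Complex.ofReal_cos, ← Complex.ofReal_sin]
  have hzne : (Real.cos θ : ℂ) + (Real.sin θ : ℂ) * Complex.I ≠ 0 := by
    intro h
    have := congrArg Complex.im h
    simp at this
    exact hs.ne' this
  have hmob : mobiusAct !![2 * Real.cos θ - σ * ω, -1; 1, 0] (Complex.exp (θ * Complex.I))
      = (Real.cos θ - σ * ω : ℝ) + (Real.sin θ : ℂ) * Complex.I := by
    rw [hz]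
    simp only [mobiusAct, Matrix.of_apply, Matrix.cons_val', Matrix.cons_val_zero, Matrix.cons_val_one,
      Matrix.head_cons, Matrix.empty_val', Matrix.cons_val_fin_one, Matrix.head_fin_const]
    rw [div_eq_iff (by simpa using hzne)]
    push_cast
    have hcs : Complex.sin θ ^ 2 + Complex.cos θ ^ 2 = 1 := Complex.sin_sq_add_cos_sq θ
    linear_combination (-(Complex.sin θ)^2) * Complex.I_sq + hcs
  rw [hmob, hz]
  simp only [d₂, Complex.add_re, Complex.add_im, Complex.mul_re, Complex.mul_im,
    Complex.I_re, Complex.I_im, Complex.ofReal_re, Complex.ofReal_im]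
  rw [div_eq_div_iff (by positivity) (by positivity)]
  ring
end
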